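/- arXiv:1701.07965 — 8 statements merged into one kernel-verified Lean document; each statement's English description precedes it below -/
import Mathlib

section
/- Let (X,d) be a complete and bounded metric space, let φ : [0,∞) → [0,∞) be a comparison function, and let f : X → X be a φ-contraction. Then f has a unique fixed point x₀, and for every x ∈ X the sequence of iterates f^[n](x) converges to x₀ as n → ∞. -/
open Filter Topology Set

/-- `φ : [0,∞) → [0,∞)` is a comparison function: it maps `[0,∞)` into `[0,∞)`,
is increasing, satisfies `φ t < t` for `t > 0`, and is right-continuous. -/
def IsComparisonFn (φ : ℝ → ℝ) : Prop :=
  (∀ t : ℝ, 0 ≤ t → 0 ≤ φ t) ∧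
  MonotoneOn φ (Set.Ici (0 : ℝ)) ∧
  (∀ t : ℝ, 0 < t → φ t < t) ∧
  (∀ t : ℝ, 0 ≤ t → ContinuousWithinAt φ (Set.Ici t) t)

/-- `f_{α₁…αₙ} = f_{α₁} ∘ f_{α₂} ∘ … ∘ f_{αₙ}` (the identity for the empty word). -/
def WordMap {X I : Type*} (f : I → X → X) : List I → X → X
  | [] => id
  | i :: w => f i ∘ WordMap f w

/-- `[α]_n`: the finite word consisting of the first `n` letters of the infinite word `α`. -/
def Pref {I : Type*} (α : ℕ → I) (n : ℕ) : List I := List.ofFn (fun k : Fin n => α (k : ℕ))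

/-- `X_w = f_w(X)`, the image of the whole space under the word map. -/
def WordSet {X I : Type*} (f : I → X → X) (w : List I) : Set X := Set.range (WordMap f w)

/-- A family `(f_i)_{i ∈ I}` of self-maps of `X` has attractor if:
(a) for every infinite word `α`, `⋂ₙ X_{[α]ₙ}` has a unique element `a_α`;
(b) whenever `a_α ≠ a_β`, some `X_{[α]_{n₀}}` and `X_{[β]_{n₀}}` are disjoint. -/
def HasAttractor {X I : Type*} (f : I → X → X) : Prop :=
  (∀ α : ℕ → I, ∃! a : X, ∀ n : ℕ, a ∈ WordSet f (Pref α n)) ∧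
  (∀ α β : ℕ → I, ∀ a b : X,
    (∀ n : ℕ, a ∈ WordSet f (Pref α n)) → (∀ n : ℕ, b ∈ WordSet f (Pref β n)) →
    a ≠ b →
    ∃ n₀ : ℕ, WordSet f (Pref α n₀) ∩ WordSet f (Pref β n₀) = ∅)

/-!
If `dist x y ≤ C` on all of `X`, then `dist (f^[n] x) (f^[n] y) ≤ φ^[n] C` for all `x, y`. The
decreasing sequence `φ^[n] C` has a limit `L ≥ 0` which it approaches from above, so by
right-continuity `φ L = L`, forcing `L = 0`. Thus the images `f^[n] '' X` shrink uniformly to a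
point: every orbit is Cauchy, all orbits have the same limit, and this limit is fixed because `f`
is `1`-Lipschitz.
-/

open Function

namespace IsComparisonFn

variable {φ : ℝ → ℝ}

theorem map_zero (hφ : IsComparisonFn φ) : φ 0 = 0 := by
  obtain ⟨hnn, hmono, hlt, -⟩ := hφ
  refine le_antisymm (not_lt.1 fun hpos => ?_) (hnn 0 le_rfl)
  exact (hlt _ hpos).not_ge (hmono (mem_Ici.2 le_rfl) (mem_Ici.2 hpos.le) hpos.le)

theorem le_self (hφ : IsComparisonFn φ) {t : ℝ} (ht : 0 ≤ t) : φ t ≤ t := by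
  rcases ht.eq_or_lt with rfl | ht
  · exact hφ.map_zero.le
  · exact (hφ.2.2.1 t ht).le

theorem iterate_nonneg (hφ : IsComparisonFn φ) {t : ℝ} (ht : 0 ≤ t) (n : ℕ) :
    0 ≤ φ^[n] t :=
  (MapsTo.iterate (fun s hs => hφ.1 s hs : MapsTo φ (Ici 0) (Ici 0)) n) ht

theorem antitone_iterate (hφ : IsComparisonFn φ) {t : ℝ} (ht : 0 ≤ t) :
    Antitone fun n => φ^[n] t :=
  antitone_nat_of_succ_le fun n => by
    rw [iterate_succ_apply']
    exact hφ.le_self (hφ.iterate_nonneg ht n)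

theorem tendsto_iterate_atTop_zero (hφ : IsComparisonFn φ) {t : ℝ} (ht : 0 ≤ t) :
    Tendsto (fun n => φ^[n] t) atTop (𝓝 0) := by
  have hbdd : BddBelow (range fun n => φ^[n] t) :=
    ⟨0, forall_mem_range.2 (hφ.iterate_nonneg ht)⟩
  have hlim := tendsto_atTop_ciInf (hφ.antitone_iterate ht) hbdd
  set L := ⨅ n, φ^[n] t
  have hL : 0 ≤ L := le_ciInf (hφ.iterate_nonneg ht)
  have hfix : φ L = L := by
    have hright : Tendsto (fun n => φ^[n] t) atTop (𝓝[≥] L) :=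
      tendsto_nhdsWithin_iff.2 ⟨hlim, .of_forall (ciInf_le hbdd)⟩
    refine tendsto_nhds_unique ?_ (hlim.comp (tendsto_add_atTop_nat 1))
    simpa only [Function.comp_def, iterate_succ_apply'] using
      (hφ.2.2.2 L hL).tendsto.comp hright
  rcases hL.eq_or_lt with hL0 | hLpos
  · rwa [hL0]
  · exact absurd hfix (hφ.2.2.1 L hLpos).ne

end IsComparisonFn

theorem dist_iterate_le_iterate_of_forall_dist_le {X : Type*} [PseudoMetricSpace X]
    {φ : ℝ → ℝ} (hφ : MonotoneOn φ (Ici 0)) {f : X → X}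
    (hf : ∀ x y, dist (f x) (f y) ≤ φ (dist x y)) {C : ℝ} (hC : ∀ x y : X, dist x y ≤ C)
    (n : ℕ) (x y : X) : dist (f^[n] x) (f^[n] y) ≤ φ^[n] C := by
  induction n with
  | zero => exact hC x y
  | succ n ih =>
    rw [iterate_succ_apply', iterate_succ_apply', iterate_succ_apply']
    exact (hf _ _).trans (hφ dist_nonneg (dist_nonneg.trans ih) ih)

theorem exists_fixedPt_forall_tendsto_iterate {X : Type*} [MetricSpace X] [CompleteSpace X]
    [Nonempty X] {f : X → X} (hf : Continuous f) {a : ℕ → ℝ} (ha : Tendsto a atTop (𝓝 0))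
    (hfa : ∀ n x y, dist (f^[n] x) (f^[n] y) ≤ a n) :
    ∃ x₀, IsFixedPt f x₀ ∧ (∀ y, IsFixedPt f y → y = x₀) ∧
      ∀ x, Tendsto (fun n => f^[n] x) atTop (𝓝 x₀) := by
  obtain ⟨x⟩ := ‹Nonempty X›
  have hcauchy : CauchySeq fun n => f^[n] x := by
    refine cauchySeq_of_le_tendsto_0' a (fun n m hnm => ?_) ha
    obtain ⟨k, rfl⟩ := Nat.exists_eq_add_of_le hnm
    rw [iterate_add_apply]
    exact hfa n x (f^[k] x)
  obtain ⟨x₀, hx₀⟩ := cauchySeq_tendsto_of_complete hcauchy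
  have hfix : IsFixedPt f x₀ := isFixedPt_of_tendsto_iterate hx₀ hf.continuousAt
  have hattract : ∀ z, Tendsto (fun n => f^[n] z) atTop (𝓝 x₀) := fun z => by
    refine tendsto_iff_dist_tendsto_zero.2 (squeeze_zero (fun _ => dist_nonneg) (fun n => ?_) ha)
    simpa only [iterate_fixed hfix n] using hfa n z x₀
  refine ⟨x₀, hfix, fun y hy => ?_, hattract⟩
  have hconst := hattract y
  simp only [iterate_fixed hy] at hconst
  exact tendsto_nhds_unique tendsto_const_nhds hconst

/-- **Browder's fixed point theorem.** On a complete and bounded metric space,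
every `φ`-contraction (with `φ` a comparison function) has a unique fixed point `x₀`,
and all orbits converge to `x₀`. -/
theorem browder_fixed_point {X : Type*} [MetricSpace X] [CompleteSpace X] [Nonempty X]
    (hbdd : ∃ C : ℝ, ∀ x y : X, dist x y ≤ C)
    (φ : ℝ → ℝ) (hφ : IsComparisonFn φ)
    (f : X → X) (hf : ∀ x y : X, dist (f x) (f y) ≤ φ (dist x y)) :
    ∃ x₀ : X, f x₀ = x₀ ∧ (∀ y : X, f y = y → y = x₀) ∧
      ∀ x : X, Tendsto (fun n : ℕ => f^[n] x) atTop (𝓝 x₀) := by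
  obtain ⟨C, hC⟩ := hbdd
  have hC0 : 0 ≤ C := dist_nonneg.trans (hC (Classical.arbitrary X) (Classical.arbitrary X))
  have hf_lip : LipschitzWith 1 f := .mk_one fun x y => (hf x y).trans (hφ.le_self dist_nonneg)
  exact exists_fixedPt_forall_tendsto_iterate hf_lip.continuous
    (hφ.tendsto_iterate_atTop_zero hC0) (dist_iterate_le_iterate_of_forall_dist_le hφ.2.1 hf hC)
end

section
/- Let φ : [0,∞) → [0,∞) be a function such that φ(t) < t for every t > 0 and φ is right-continuous. Then for every t > 0, the sequence of iterates φ^[n](t) converges to 0 as n → ∞. -/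
open Filter Topology Set

/-- If `φ : [0,∞) → [0,∞)` satisfies `φ t < t` for every `t > 0` and is right-continuous,
then `φ^[n] t → 0` for every `t > 0`. -/
theorem comparison_iterates_tendsto_zero (φ : ℝ → ℝ)
    (hmap : ∀ t : ℝ, 0 ≤ t → 0 ≤ φ t)
    (hlt : ∀ t : ℝ, 0 < t → φ t < t)
    (hrc : ∀ t : ℝ, 0 ≤ t → ContinuousWithinAt φ (Set.Ici t) t) :
    ∀ t : ℝ, 0 < t → Tendsto (fun n : ℕ => φ^[n] t) atTop (𝓝 0) := by
  -- First: φ 0 = 0.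
  have h0 : φ 0 = 0 := by
    have h1 : Tendsto φ (𝓝[>] (0:ℝ)) (𝓝 (φ 0)) :=
      (hrc 0 le_rfl).mono_left (nhdsWithin_mono _ Ioi_subset_Ici_self)
    have h2 : φ 0 ≤ 0 := by
      refine le_of_tendsto_of_tendsto h1 (tendsto_id.mono_left nhdsWithin_le_nhds) ?_
      filter_upwards [self_mem_nhdsWithin] with s (hs : 0 < s)
      exact (hlt s hs).le
    exact le_antisymm h2 (hmap 0 le_rfl)
  intro t ht
  set a : ℕ → ℝ := fun n => φ^[n] t with ha
  have hnn : ∀ n, 0 ≤ a n := by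
    intro n
    induction n with
    | zero => exact ht.le
    | succ n ih =>
      have : a (n+1) = φ (a n) := Function.iterate_succ_apply' φ n t
      rw [this]; exact hmap _ ih
  have hstep : ∀ n, a (n+1) = φ (a n) := fun n => Function.iterate_succ_apply' φ n t
  have hanti : Antitone a := by
    refine antitone_nat_of_succ_le fun n => ?_
    rcases eq_or_lt_of_le (hnn n) with h | h
    · rw [hstep n, ← h, h0]
    · exact (hstep n ▸ hlt _ h).le
  have hbdd : BddBelow (Set.range a) := ⟨0, by rintro x ⟨n, rfl⟩; exact hnn n⟩
  set L : ℝ := ⨅ n, a n with hL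
  have htend : Tendsto a atTop (𝓝 L) := tendsto_atTop_ciInf hanti hbdd
  have hLnn : 0 ≤ L := le_ciInf hnn
  have hLle : ∀ n, L ≤ a n := fun n => ciInf_le hbdd n
  rcases eq_or_lt_of_le hLnn with h | h
  · rwa [← h] at htend
  · exfalso
    -- φ (a n) → φ L by right-continuity at L
    have htendW : Tendsto a atTop (𝓝[Set.Ici L] L) :=
      tendsto_nhdsWithin_of_tendsto_nhds_of_eventually_within a htend
        (Eventually.of_forall fun n => hLle n)
    have h1 : Tendsto (fun n => φ (a n)) atTop (𝓝 (φ L)) :=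
      (hrc L hLnn).tendsto.comp htendW
    have h2 : Tendsto (fun n => a (n+1)) atTop (𝓝 L) :=
      htend.comp (tendsto_add_atTop_nat 1)
    have h3 : (fun n => a (n+1)) = fun n => φ (a n) := funext hstep
    rw [h3] at h2
    have := tendsto_nhds_unique h1 h2
    exact absurd this (ne_of_lt (hlt L h))
end

section
/- Let (X,d) be a complete and bounded metric space, I a nonempty finite set, φ : [0,∞) → [0,∞) a comparison function, and for each i ∈ I let f_i : X → X be a φ-contraction. For each α ∈ Λ(I) let a_α be the unique element of ⋂_{n∈ℕ*} X_{[α]_n}, and let A = {a_α : α ∈ Λ(I)}. Then the map π : Λ(I) → A given by π(α) = a_α is continuous, where Λ(I) = I^{ℕ*} carries the product topology (equivalently, the topology of the metric d_Λ(α,β) = Σ_{k≥1} (1 − δ_{α_k,β_k})/3^k) and A ⊆ X carries the metric topology. -/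
open Filter Topology Set

/-- For an IFS of `φ`-contractions on a complete bounded metric space, the map
`π : Λ(I) → A`, `π(α) = a_α`, is continuous (with `Λ(I) = I^ℕ` carrying the
product topology, `I` discrete). -/
theorem ifs_coding_map_continuous {X I : Type*} [MetricSpace X] [CompleteSpace X] [Nonempty X]
    [Finite I] [Nonempty I] [TopologicalSpace I] [DiscreteTopology I]
    (hbdd : ∃ C : ℝ, ∀ x y : X, dist x y ≤ C)
    (φ : ℝ → ℝ) (hφ : IsComparisonFn φ)
    (f : I → X → X) (hf : ∀ i : I, ∀ x y : X, dist (f i x) (f i y) ≤ φ (dist x y))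
    (a : (ℕ → I) → X) (ha : ∀ (α : ℕ → I) (n : ℕ), a α ∈ WordSet f (Pref α n)) :
    Continuous a := by
  classical
  obtain ⟨C, hC⟩ := hbdd
  obtain ⟨x₀⟩ := (inferInstance : Nonempty X)
  have hC0 : (0:ℝ) ≤ C := le_trans dist_nonneg (hC x₀ x₀)
  obtain ⟨hφ0, hφmono, hφlt, hφrc⟩ := hφ
  -- φ t ≤ t for t ≥ 0 (need φ 0 ≤ 0 from right continuity)
  have hφ0le : φ 0 ≤ 0 := by
    have h1 : Tendsto φ (𝓝[>] (0:ℝ)) (𝓝 (φ 0)) :=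
      (hφrc 0 le_rfl).mono_left (nhdsWithin_mono _ Set.Ioi_subset_Ici_self)
    have h2 : Tendsto (fun t : ℝ => t) (𝓝[>] (0:ℝ)) (𝓝 0) :=
      tendsto_id.mono_right nhdsWithin_le_nhds
    exact le_of_tendsto_of_tendsto h1 h2
      (eventually_mem_nhdsWithin.mono fun t ht => (hφlt t ht).le)
  have hφle : ∀ t : ℝ, 0 ≤ t → φ t ≤ t := by
    intro t ht
    rcases ht.lt_or_eq with h | h
    · exact (hφlt t h).le
    · rw [← h]; exact hφ0le
  set g : ℕ → ℝ := fun n => φ^[n] C with hg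
  have hgnn : ∀ n, 0 ≤ g n := by
    intro n
    induction n with
    | zero => simpa [hg] using hC0
    | succ n ih => simp only [hg, Function.iterate_succ_apply']; exact hφ0 _ ih
  have hganti : Antitone g := by
    apply antitone_nat_of_succ_le
    intro n
    simp only [hg, Function.iterate_succ_apply']
    exact hφle _ (hgnn n)
  have hbb : BddBelow (Set.range g) := ⟨0, by rintro _ ⟨n, rfl⟩; exact hgnn n⟩
  have htend : Tendsto g atTop (𝓝 (⨅ n, g n)) := tendsto_atTop_ciInf hganti hbb
  set L : ℝ := ⨅ n, g n with hL
  have hL0 : 0 ≤ L := le_ciInf hgnn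
  have hLzero : L = 0 := by
    by_contra hne
    have hLpos : 0 < L := hL0.lt_of_ne (Ne.symm hne)
    have hmem : ∀ n, g n ∈ Set.Ici L := fun n => ciInf_le hbb n
    have htendW : Tendsto g atTop (𝓝[Set.Ici L] L) :=
      tendsto_nhdsWithin_of_tendsto_nhds_of_eventually_within _ htend
        (Filter.Eventually.of_forall hmem)
    have hcomp : Tendsto (fun n => φ (g n)) atTop (𝓝 (φ L)) :=
      Filter.Tendsto.comp (hφrc L hL0) htendW
    have heq : (fun n => φ (g n)) = fun n => g (n + 1) := by
      funext n; simp [hg, Function.iterate_succ_apply']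
    have hcomp2 : Tendsto (fun n => g (n + 1)) atTop (𝓝 L) :=
      htend.comp (tendsto_add_atTop_nat 1)
    have : φ L = L := tendsto_nhds_unique (heq ▸ hcomp) hcomp2
    exact absurd this (ne_of_lt (hφlt L hLpos))
  have htend0 : Tendsto g atTop (𝓝 0) := hLzero ▸ htend
  -- distance bound on word images
  have hword : ∀ w : List I, ∀ x y : X,
      dist (WordMap f w x) (WordMap f w y) ≤ φ^[w.length] C := by
    intro w
    induction w with
    | nil => intro x y; simpa [WordMap] using hC x y
    | cons i w ih =>
      intro x y
      simp only [WordMap, Function.comp_apply, List.length_cons,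
        Function.iterate_succ_apply']
      exact (hf i _ _).trans
        (hφmono (Set.mem_Ici.2 dist_nonneg) (Set.mem_Ici.2 (hgnn w.length)) (ih x y))
  -- continuity
  rw [continuous_iff_continuousAt]
  intro α
  rw [ContinuousAt, Metric.tendsto_nhds]
  intro ε hε
  obtain ⟨n, hn⟩ := ((tendsto_order.1 htend0).2 ε hε).exists
  have hopen : ∀ᶠ β : ℕ → I in 𝓝 α, ∀ k ∈ Set.Iio n, β k = α k := by
    rw [Filter.eventually_all_finite (Set.finite_Iio n)]
    intro k _
    have hO : IsOpen {β : ℕ → I | β k = α k} := by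
      have : {β : ℕ → I | β k = α k} = (fun β : ℕ → I => β k) ⁻¹' {α k} := rfl
      rw [this]
      exact IsOpen.preimage (continuous_apply k) (isOpen_discrete ({α k} : Set I))
    exact hO.mem_nhds rfl
  filter_upwards [hopen] with β hβ
  have hpref : Pref β n = Pref α n := by
    unfold Pref
    exact congrArg List.ofFn (funext fun k => hβ k k.2)
  obtain ⟨x, hx⟩ := ha β n
  obtain ⟨y, hy⟩ := ha α n
  rw [hpref] at hx
  have hd : dist (a β) (a α) ≤ φ^[(Pref α n).length] C := by
    rw [← hx, ← hy]; exact hword _ x y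
  have hlen : (Pref α n).length = n := by simp [Pref]
  rw [hlen] at hd
  exact lt_of_le_of_lt hd hn
end

section
/- Let (X,d) be a complete and bounded metric space, I a nonempty finite set, φ : [0,∞) → [0,∞) a comparison function, and for each i ∈ I let f_i : X → X be a φ-contraction. For each α ∈ Λ(I) let a_α be the unique element of ⋂_{n∈ℕ*} X_{[α]_n}, and let A = {a_α : α ∈ Λ(I)}. Then A = ⋃_{i∈I} f_i(A), i.e. A is a fixed point of the set map C ↦ ⋃_{i∈I} f_i(C). -/
open Filter Topology Set

section Aux


variable {φ : ℝ → ℝ}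

lemma iter_nonneg (h0 : ∀ t : ℝ, 0 ≤ t → 0 ≤ φ t) :
    ∀ n : ℕ, ∀ t : ℝ, 0 ≤ t → 0 ≤ φ^[n] t := by
  intro n
  induction n with
  | zero => intro t ht; simpa using ht
  | succ n ih =>
    intro t ht
    rw [Function.iterate_succ']
    exact h0 _ (ih t ht)

lemma iter_monoOn (h0 : ∀ t : ℝ, 0 ≤ t → 0 ≤ φ t) (hm : MonotoneOn φ (Set.Ici (0:ℝ))) :
    ∀ n : ℕ, ∀ s t : ℝ, 0 ≤ s → 0 ≤ t → s ≤ t → φ^[n] s ≤ φ^[n] t := by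
  intro n
  induction n with
  | zero => intro s t _ _ hst; simpa using hst
  | succ n ih =>
    intro s t hs ht hst
    simp only [Function.iterate_succ', Function.comp_apply]
    exact hm (Set.mem_Ici.mpr (iter_nonneg h0 n s hs)) (Set.mem_Ici.mpr (iter_nonneg h0 n t ht)) (ih s t hs ht hst)

lemma iter_tendsto (hφ : IsComparisonFn φ) {C : ℝ} (hC : 0 ≤ C) :
    Tendsto (fun n => φ^[n] C) atTop (𝓝 0) := by
  obtain ⟨h0, hm, hlt, hrc⟩ := hφ
  set t : ℕ → ℝ := fun n => φ^[n] C with ht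
  have htnn : ∀ n, 0 ≤ t n := fun n => iter_nonneg h0 n C hC
  have hdec : ∀ n, t (n+1) ≤ t n := by
    intro n
    have : t (n+1) = φ (t n) := by
      simp only [ht]; rw [Function.iterate_succ']; rfl
    rw [this]
    have hphi0 : φ 0 = 0 := by
      rcases eq_or_lt_of_le (h0 0 le_rfl) with h' | h'
      · exact h'.symm
      · have h1 : φ 0 ≤ φ (φ 0) := hm (Set.mem_Ici.mpr le_rfl) (Set.mem_Ici.mpr (h0 0 le_rfl)) (h0 0 le_rfl)
        have h2 : φ (φ 0) < φ 0 := hlt _ h'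
        linarith
    rcases eq_or_lt_of_le (htnn n) with h | h
    · exact le_of_eq (by rw [← h, hphi0])
    · exact (hlt _ h).le
  have hanti : Antitone t := antitone_nat_of_succ_le hdec
  have hbdd : BddBelow (Set.range t) := ⟨0, fun x ⟨n, hn⟩ => hn ▸ htnn n⟩
  have hL : Tendsto t atTop (𝓝 (⨅ n, t n)) := tendsto_atTop_ciInf hanti hbdd
  set L := ⨅ n, t n with hLdef
  have hLnn : 0 ≤ L := le_ciInf htnn
  have hLle : ∀ n, L ≤ t n := fun n => ciInf_le hbdd n
  have hLzero : L = 0 := by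
    by_contra hne
    have hLpos : 0 < L := lt_of_le_of_ne hLnn (Ne.symm hne)
    have hc : ContinuousWithinAt φ (Set.Ici L) L := hrc L hLnn
    have htend : Tendsto t atTop (𝓝[Set.Ici L] L) :=
      tendsto_nhdsWithin_of_tendsto_nhds_of_eventually_within t hL
        (Eventually.of_forall hLle)
    have h1 : Tendsto (fun n => φ (t n)) atTop (𝓝 (φ L)) := hc.tendsto.comp htend
    have h2 : Tendsto (fun n => φ (t n)) atTop (𝓝 L) := by
      have : (fun n => φ (t n)) = fun n => t (n+1) := by
        funext n; simp only [ht]; rw [Function.iterate_succ']; rfl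
      rw [this]
      exact hL.comp (tendsto_add_atTop_nat 1)
    have := tendsto_nhds_unique h1 h2
    exact absurd (hlt L hLpos) (by rw [this]; exact lt_irrefl L)
  rw [← hLzero]; exact hL

lemma wordmap_dist {X I : Type*} [MetricSpace X] {φ : ℝ → ℝ}
    (h0 : ∀ t : ℝ, 0 ≤ t → 0 ≤ φ t) (hm : MonotoneOn φ (Set.Ici (0:ℝ)))
    {f : I → X → X} (hf : ∀ i : I, ∀ x y : X, dist (f i x) (f i y) ≤ φ (dist x y)) :
    ∀ w : List I, ∀ u v : X, dist (WordMap f w u) (WordMap f w v) ≤ φ^[w.length] (dist u v) := by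
  intro w
  induction w with
  | nil => intro u v; simp [WordMap]
  | cons i w ih =>
    intro u v
    have h1 : dist (WordMap f (i::w) u) (WordMap f (i::w) v)
        ≤ φ (dist (WordMap f w u) (WordMap f w v)) := hf i _ _
    have h2 : φ (dist (WordMap f w u) (WordMap f w v)) ≤ φ (φ^[w.length] (dist u v)) :=
      hm dist_nonneg (iter_nonneg h0 _ _ dist_nonneg) (ih u v)
    calc dist (WordMap f (i::w) u) (WordMap f (i::w) v) ≤ _ := h1
      _ ≤ φ (φ^[w.length] (dist u v)) := h2
      _ = φ^[(i::w).length] (dist u v) := by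
          rw [List.length_cons, Function.iterate_succ']; rfl

lemma wordset_unique {X I : Type*} [MetricSpace X] [Nonempty X] {φ : ℝ → ℝ}
    (hφ : IsComparisonFn φ) {C : ℝ} (hbdd : ∀ x y : X, dist x y ≤ C)
    {f : I → X → X} (hf : ∀ i : I, ∀ x y : X, dist (f i x) (f i y) ≤ φ (dist x y))
    {α : ℕ → I} {x y : X}
    (hx : ∀ n : ℕ, x ∈ WordSet f (Pref α n)) (hy : ∀ n : ℕ, y ∈ WordSet f (Pref α n)) :
    x = y := by
  obtain ⟨h0, hm, hlt, hrc⟩ := hφ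
  have hC : 0 ≤ C := le_trans dist_nonneg (hbdd (Classical.arbitrary X) (Classical.arbitrary X))
  have key : ∀ n : ℕ, dist x y ≤ φ^[n] C := by
    intro n
    obtain ⟨u, hu⟩ := hx n
    obtain ⟨v, hv⟩ := hy n
    have hlen : (Pref α n).length = n := by simp [Pref]
    calc dist x y = dist (WordMap f (Pref α n) u) (WordMap f (Pref α n) v) := by rw [hu, hv]
      _ ≤ φ^[(Pref α n).length] (dist u v) := wordmap_dist h0 hm hf _ u v
      _ ≤ φ^[n] C := by
          rw [hlen]
          exact iter_monoOn h0 hm n _ _ dist_nonneg hC (hbdd u v)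
  have : dist x y ≤ 0 := ge_of_tendsto (iter_tendsto ⟨h0, hm, hlt, hrc⟩ hC)
    (Eventually.of_forall key)
  exact dist_le_zero.mp this


end Aux

/-- For an IFS of `φ`-contractions on a complete bounded metric space,
the attractor `A = {a_α : α ∈ Λ(I)}` satisfies `A = ⋃ᵢ f_i(A)`. -/
theorem ifs_attractor_self_similar {X I : Type*} [MetricSpace X] [CompleteSpace X] [Nonempty X]
    [Finite I] [Nonempty I]
    (hbdd : ∃ C : ℝ, ∀ x y : X, dist x y ≤ C)
    (φ : ℝ → ℝ) (hφ : IsComparisonFn φ)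
    (f : I → X → X) (hf : ∀ i : I, ∀ x y : X, dist (f i x) (f i y) ≤ φ (dist x y))
    (a : (ℕ → I) → X) (ha : ∀ (α : ℕ → I) (n : ℕ), a α ∈ WordSet f (Pref α n)) :
    Set.range a = ⋃ i : I, f i '' Set.range a := by
  obtain ⟨C, hC⟩ := hbdd
  apply Set.Subset.antisymm
  · rintro _ ⟨α, rfl⟩
    -- a α = f (α 0) (a (shift α))
    set σ : ℕ → I := fun n => α (n + 1) with hσ
    have hmem : ∀ n : ℕ, f (α 0) (a σ) ∈ WordSet f (Pref α n) := by
      intro n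
      cases n with
      | zero => exact ⟨f (α 0) (a σ), rfl⟩
      | succ n =>
        obtain ⟨u, hu⟩ := ha σ n
        refine ⟨u, ?_⟩
        have hpref : Pref α (n + 1) = α 0 :: Pref σ n := by
          simp [Pref, List.ofFn_succ, hσ]
        rw [hpref]
        show f (α 0) (WordMap f (Pref σ n) u) = f (α 0) (a σ)
        rw [hu]
    have : a α = f (α 0) (a σ) := wordset_unique hφ hC hf (ha α) hmem
    rw [this]
    exact Set.mem_iUnion.mpr ⟨α 0, a σ, ⟨σ, rfl⟩, rfl⟩
  · rintro x hx
    obtain ⟨_, ⟨i, rfl⟩, _, ⟨α, rfl⟩, rfl⟩ := hx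
    -- f i (a α) = a (i :: α)
    set β : ℕ → I := fun n => Nat.casesOn n i α with hβ
    have hmem : ∀ n : ℕ, f i (a α) ∈ WordSet f (Pref β n) := by
      intro n
      cases n with
      | zero => exact ⟨f i (a α), rfl⟩
      | succ n =>
        obtain ⟨u, hu⟩ := ha α n
        refine ⟨u, ?_⟩
        have hpref : Pref β (n + 1) = i :: Pref α n := by
          simp [Pref, List.ofFn_succ, hβ]
        rw [hpref]
        show f i (WordMap f (Pref α n) u) = f i (a α)
        rw [hu]
    have : f i (a α) = a β := (wordset_unique hφ hC hf (ha β) hmem).symm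
    exact this ▸ ⟨β, rfl⟩
end

section
/- Let X be a set, I a nonempty finite set, and (f_i)_{i∈I} a family of functions f_i : X → X having attractor A. Then there exist a metric d on A and a comparison function φ : [0,∞) → [0,∞) such that f_i maps A into A and d(f_i(x), f_i(y)) ≤ φ(d(x,y)) for every i ∈ I and every x,y ∈ A. -/
open Filter Topology Set

/-- The attractor `A = {a_α : α ∈ Λ(I)}` of a family of functions having attractor. -/
def AttractorSet {X I : Type*} (f : I → X → X) : Set X :=
  {x | ∃ α : ℕ → I, ∀ n : ℕ, x ∈ WordSet f (Pref α n)}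

/-!
Call two points `n`-close when they have addresses whose level-`n` cylinders meet (or they are
equal). By compactness of `I^ℕ`, condition (b) makes these relations separate points, and two
steps at some deeper level `m` stay within level `n`; so they form a countable basis of a
uniformity, which is induced by a pseudometric `d₀`. As `f_w` makes any two points of the
attractor `|w|`-close, `d₀(f_w x, f_w y) → 0` uniformly as `|w| → ∞`. The metric is
`d(x, y) = sup_w (2 - 2^{-|w|}) min(d₀(f_w x, f_w y), 1)`: in `d(f_i x, f_i y)`, the words of
length `< J` gain the factor `1 - 2^{-(J+1)}` from the weights, while the longer ones are small,
so `d(f_i x, f_i y) ≤ inf_J max((1 - 2^{-(J+1)}) d(x, y), ε_J)` with `ε_J → 0`.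
-/

open scoped SetRel

section Words

variable {X I : Type*} (f : I → X → X)

theorem wordMap_append (u v : List I) : WordMap f (u ++ v) = WordMap f u ∘ WordMap f v := by
  induction u with
  | nil => rfl
  | cons i u ih => simp only [List.cons_append, WordMap, ih, Function.comp_assoc]

theorem pref_succ (α : ℕ → I) (n : ℕ) : Pref α (n + 1) = Pref α n ++ [α n] := by
  simp only [Pref, List.ofFn_succ', List.concat_eq_append, Fin.val_castSucc, Fin.val_last]

theorem wordSet_pref_antitone (α : ℕ → I) : Antitone fun n => WordSet f (Pref α n) := by
  refine antitone_nat_of_succ_le fun n => ?_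
  rw [WordSet, WordSet, pref_succ, wordMap_append]
  exact Set.range_comp_subset_range _ _

def IsAddress (α : ℕ → I) (x : X) : Prop := ∀ n, x ∈ WordSet f (Pref α n)

def CylindersMeet (α β : ℕ → I) (n : ℕ) : Prop :=
  (WordSet f (Pref α n) ∩ WordSet f (Pref β n)).Nonempty

variable {f}

theorem CylindersMeet.mono {α β : ℕ → I} {m n : ℕ} (h : CylindersMeet f α β n) (hmn : m ≤ n) :
    CylindersMeet f α β m :=
  Set.Nonempty.mono
    (Set.inter_subset_inter (wordSet_pref_antitone f α hmn) (wordSet_pref_antitone f β hmn)) h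

theorem CylindersMeet.symm {α β : ℕ → I} {n : ℕ} (h : CylindersMeet f α β n) :
    CylindersMeet f β α n := by
  rwa [CylindersMeet, Set.inter_comm]

theorem IsAddress.cylindersMeet {α β : ℕ → I} {x : X} (hα : IsAddress f α x)
    (hβ : IsAddress f β x) (n : ℕ) : CylindersMeet f α β n :=
  ⟨x, hα n, hβ n⟩

def consWord (i : I) (α : ℕ → I) : ℕ → I
  | 0 => i
  | k + 1 => α k

theorem pref_consWord (i : I) (α : ℕ → I) (n : ℕ) :
    Pref (consWord i α) (n + 1) = i :: Pref α n := by
  simp only [Pref, List.ofFn_succ]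
  rfl

theorem IsAddress.wordMap {α : ℕ → I} {x : X} (h : IsAddress f α x) (w : List I) :
    IsAddress f (w.foldr consWord α) (WordMap f w x) := by
  induction w with
  | nil => exact h
  | cons i w ih =>
    rintro (_ | n)
    · exact ⟨_, rfl⟩
    · obtain ⟨p, hp⟩ := ih n
      exact ⟨p, by rw [List.foldr_cons, pref_consWord, WordMap, Function.comp_apply, hp]; rfl⟩

theorem pref_foldr_consWord (w : List I) (α β : ℕ → I) {n : ℕ} (hn : n ≤ w.length) :
    Pref (w.foldr consWord α) n = Pref (w.foldr consWord β) n := by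
  induction w generalizing n with
  | nil => rw [Nat.le_zero.1 hn]; rfl
  | cons i w ih =>
    cases n with
    | zero => rfl
    | succ n =>
      rw [List.foldr_cons, List.foldr_cons, pref_consWord, pref_consWord,
        ih (Nat.le_of_succ_le_succ hn)]

theorem mapsTo_attractorSet (i : I) : Set.MapsTo (f i) (AttractorSet f) (AttractorSet f) :=
  fun _ ⟨_, hα⟩ => ⟨_, IsAddress.wordMap hα [i]⟩

end Words

section Compactness

variable {I : Type*} [TopologicalSpace I] [DiscreteTopology I] {Y : Type*} [TopologicalSpace Y]
  {F G : Y → ℕ → I}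

theorem isClosed_setOf_pref (hF : Continuous F) (hG : Continuous G) (n : ℕ)
    (P : List I → List I → Prop) : IsClosed {y | P (Pref (F y) n) (Pref (G y) n)} := by
  have hcont : Continuous fun y => (fun k : Fin n => F y k, fun k : Fin n => G y k) := by
    fun_prop
  exact (isClosed_discrete {p : (Fin n → I) × (Fin n → I) |
    P (List.ofFn p.1) (List.ofFn p.2)}).preimage hcont

variable {X : Type*} (f : I → X → X)

theorem isClosed_setOf_isAddress (hF : Continuous F) (x : X) :
    IsClosed {y | IsAddress f (F y) x} := by
  simp only [IsAddress, Set.ofPred_forall]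
  exact isClosed_iInter fun n => isClosed_setOf_pref hF hF n fun u _ => x ∈ WordSet f u

theorem isClosed_setOf_cylindersMeet (hF : Continuous F) (hG : Continuous G) (n : ℕ)
    (p : Prop → Prop) : IsClosed {y | p (CylindersMeet f (F y) (G y) n)} :=
  isClosed_setOf_pref hF hG n fun u v => p (WordSet f u ∩ WordSet f v).Nonempty

end Compactness

section Attractor

variable {X I : Type*} {f : I → X → X}

theorem HasAttractor.exists_isAddress (hF : HasAttractor f) (α : ℕ → I) :
    ∃ x, IsAddress f α x :=
  (hF.1 α).exists

theorem HasAttractor.eq_of_forall_cylindersMeet (hF : HasAttractor f) {α β : ℕ → I} {x y : X}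
    (hx : IsAddress f α x) (hy : IsAddress f β y) (h : ∀ n, CylindersMeet f α β n) : x = y := by
  by_contra hne
  obtain ⟨n, hn⟩ := hF.2 α β x y hx hy hne
  exact (h n).ne_empty hn

theorem HasAttractor.exists_cylindersMeet_trans [Finite I] (hF : HasAttractor f) (n : ℕ) :
    ∃ m, ∀ α β γ δ : ℕ → I, CylindersMeet f α β m → CylindersMeet f β γ m →
      CylindersMeet f γ δ m → CylindersMeet f α δ n := by
  by_contra! hcon
  let : TopologicalSpace I := ⊥
  have : DiscreteTopology I := ⟨rfl⟩
  let K : ℕ → Set ((ℕ → I) × (ℕ → I) × (ℕ → I) × (ℕ → I)) := fun m =>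
    {q | CylindersMeet f q.1 q.2.1 m ∧ CylindersMeet f q.2.1 q.2.2.1 m ∧
      CylindersMeet f q.2.2.1 q.2.2.2 m ∧ ¬ CylindersMeet f q.1 q.2.2.2 n}
  have hK : ∀ m, IsClosed (K m) := fun m =>
    (isClosed_setOf_cylindersMeet f continuous_fst continuous_snd.fst m id).inter <|
    (isClosed_setOf_cylindersMeet f continuous_snd.fst continuous_snd.snd.fst m id).inter <|
    (isClosed_setOf_cylindersMeet f continuous_snd.snd.fst continuous_snd.snd.snd m id).inter <|
    isClosed_setOf_cylindersMeet f continuous_fst continuous_snd.snd.snd n Not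
  obtain ⟨⟨α, β, γ, δ⟩, hq⟩ := IsCompact.nonempty_iInter_of_sequence_nonempty_isCompact_isClosed K
    (fun m _ hq => ⟨hq.1.mono m.le_succ, hq.2.1.mono m.le_succ, hq.2.2.1.mono m.le_succ, hq.2.2.2⟩)
    (fun m => let ⟨α, β, γ, δ, h⟩ := hcon m; ⟨(α, β, γ, δ), h⟩) (hK 0).isCompact hK
  have hq := Set.mem_iInter.1 hq
  obtain ⟨a, ha⟩ := hF.exists_isAddress α
  obtain ⟨b, hb⟩ := hF.exists_isAddress β
  obtain ⟨c, hc⟩ := hF.exists_isAddress γ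
  obtain ⟨d, hd⟩ := hF.exists_isAddress δ
  obtain rfl : a = b := hF.eq_of_forall_cylindersMeet ha hb fun m => (hq m).1
  obtain rfl : a = c := hF.eq_of_forall_cylindersMeet hb hc fun m => (hq m).2.1
  obtain rfl : a = d := hF.eq_of_forall_cylindersMeet hc hd fun m => (hq m).2.2.1
  exact (hq 0).2.2.2 (ha.cylindersMeet hd n)

variable (f) in
def cylinderRel (n : ℕ) : SetRel X X :=
  {p | p.1 = p.2 ∨ ∃ α β, IsAddress f α p.1 ∧ IsAddress f β p.2 ∧ CylindersMeet f α β n}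

theorem cylinderRel_antitone : Antitone (cylinderRel f) := by
  rintro m n hmn ⟨x, y⟩ (h | ⟨α, β, hα, hβ, hαβ⟩)
  · exact Or.inl h
  · exact Or.inr ⟨α, β, hα, hβ, hαβ.mono hmn⟩

theorem mem_cylinderRel_self (n : ℕ) (x : X) : (x, x) ∈ cylinderRel f n := Or.inl rfl

theorem mem_cylinderRel_symm {n : ℕ} {x y : X} (h : (x, y) ∈ cylinderRel f n) :
    (y, x) ∈ cylinderRel f n := by
  rcases h with h | ⟨α, β, hα, hβ, hαβ⟩
  · exact Or.inl h.symm
  · exact Or.inr ⟨β, α, hβ, hα, hαβ.symm⟩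

theorem HasAttractor.exists_cylinderRel_comp_subset [Finite I] (hF : HasAttractor f) (n : ℕ) :
    ∃ m, cylinderRel f m ○ cylinderRel f m ⊆ cylinderRel f n := by
  obtain ⟨m, hm⟩ := hF.exists_cylindersMeet_trans n
  refine ⟨max m n, ?_⟩
  have hanti := cylinderRel_antitone (f := f) (le_max_right m n)
  rintro ⟨x, z⟩ ⟨y, hxy | ⟨α, β, hα, hβ, hαβ⟩, hyz⟩
  · exact (show x = y from hxy) ▸ hanti hyz
  rcases hyz with hyz | ⟨β', γ, hβ', hγ, hβγ⟩
  · exact (show y = z from hyz) ▸ hanti (Or.inr ⟨α, β, hα, hβ, hαβ⟩)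
  exact Or.inr ⟨α, γ, hα, hγ, hm α β β' γ (hαβ.mono (le_max_left m n))
    (hβ.cylindersMeet hβ' m) (hβγ.mono (le_max_left m n))⟩

theorem HasAttractor.eq_of_forall_mem_cylinderRel [Finite I] (hF : HasAttractor f) {x y : X}
    (h : ∀ n, (x, y) ∈ cylinderRel f n) : x = y := by
  by_contra hxy
  let : TopologicalSpace I := ⊥
  have : DiscreteTopology I := ⟨rfl⟩
  let K : ℕ → Set ((ℕ → I) × (ℕ → I)) := fun n =>
    {q | IsAddress f q.1 x ∧ IsAddress f q.2 y ∧ CylindersMeet f q.1 q.2 n}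
  have hK : ∀ n, IsClosed (K n) := fun n =>
    (isClosed_setOf_isAddress f continuous_fst x).inter <|
    (isClosed_setOf_isAddress f continuous_snd y).inter <|
    isClosed_setOf_cylindersMeet f continuous_fst continuous_snd n id
  obtain ⟨⟨α, β⟩, hq⟩ := IsCompact.nonempty_iInter_of_sequence_nonempty_isCompact_isClosed K
    (fun n _ hq => ⟨hq.1, hq.2.1, hq.2.2.mono n.le_succ⟩)
    (fun n => let ⟨α, β, h⟩ := (h n).resolve_left hxy; ⟨(α, β), h⟩) (hK 0).isCompact hK
  have hq := Set.mem_iInter.1 hq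
  exact hxy (hF.eq_of_forall_cylindersMeet (hq 0).1 (hq 0).2.1 fun n => (hq n).2.2)

theorem mem_cylinderRel_wordMap {x y : X} (hx : x ∈ AttractorSet f) (hy : y ∈ AttractorSet f)
    {w : List I} {n : ℕ} (hn : n ≤ w.length) :
    (WordMap f w x, WordMap f w y) ∈ cylinderRel f n := by
  obtain ⟨α, hα⟩ := hx
  obtain ⟨β, hβ⟩ := hy
  have hαw := IsAddress.wordMap hα w
  refine Or.inr ⟨_, _, hαw, IsAddress.wordMap hβ w, _, hαw n, ?_⟩
  rw [pref_foldr_consWord w β α hn]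
  exact hαw n

end Attractor

theorem exists_pseudoMetricSpace_uniformity_hasBasis {X : Type*} {W : ℕ → SetRel X X}
    (hW : Antitone W) (hrefl : ∀ n x, (x, x) ∈ W n)
    (hsymm : ∀ n x y, (x, y) ∈ W n → (y, x) ∈ W n) (hcomp : ∀ n, ∃ m, W m ○ W m ⊆ W n) :
    ∃ d : PseudoMetricSpace X, (@uniformity X d.toUniformSpace).HasBasis (fun _ => True) W := by
  have hbasis : (⨅ n, 𝓟 (W n)).HasBasis (fun _ => True) W :=
    hasBasis_iInf_principal hW.directed_ge
  let u : UniformSpace X := .ofCore <| .mk' (⨅ n, 𝓟 (W n))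
    (fun r hr x => let ⟨n, _, hn⟩ := hbasis.mem_iff.1 hr; hn (hrefl n x))
    (fun r hr => let ⟨n, _, hn⟩ := hbasis.mem_iff.1 hr
      hbasis.mem_iff.2 ⟨n, trivial, fun p hp => hn (hsymm n p.1 p.2 hp)⟩)
    (fun r hr => let ⟨n, _, hn⟩ := hbasis.mem_iff.1 hr; let ⟨m, hm⟩ := hcomp n
      ⟨W m, hbasis.mem_of_mem trivial, hm.trans hn⟩)
  have : IsCountablyGenerated (uniformity X) := isCountablyGenerated_seq W
  obtain ⟨d, hd⟩ := UniformSpace.metrizable_uniformity X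
  exact ⟨d, hd ▸ hbasis⟩

theorem LipschitzWith.ciInf {α ι : Type*} [PseudoMetricSpace α] [Nonempty ι] {g : ι → α → ℝ}
    (hg : ∀ i, LipschitzWith 1 (g i)) (hb : ∀ x, BddBelow (range fun i => g i x)) :
    LipschitzWith 1 fun x => ⨅ i, g i x :=
  LipschitzWith.of_le_add fun x y => sub_le_iff_le_add.1 <| le_ciInf fun i =>
    sub_le_iff_le_add.2 <| (ciInf_le (hb x) i).trans (by simpa using (hg i).le_add_mul x y)

theorem isComparisonFn_iInf_max {R E : ℕ → ℝ} (hR₀ : ∀ k, 0 ≤ R k) (hR₁ : ∀ k, R k < 1)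
    (hE₀ : ∀ k, 0 ≤ E k) (hE : ∀ t > 0, ∃ k, E k < t) :
    IsComparisonFn fun t => ⨅ k, max (R k * t) (E k) := by
  have hb : ∀ t, BddBelow (range fun k => max (R k * t) (E k)) := fun t =>
    ⟨0, by rintro _ ⟨k, rfl⟩; exact (hE₀ k).trans (le_max_right _ _)⟩
  have hlip : ∀ k, LipschitzWith 1 fun t => max (R k * t) (E k) := fun k =>
    LipschitzWith.of_le_add fun s t => by
      rw [Real.dist_eq]
      have := le_abs_self (s - t)
      refine max_le ?_ (by linarith [le_max_right (R k * t) (E k), abs_nonneg (s - t)])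
      nlinarith [hR₀ k, hR₁ k, le_max_left (R k * t) (E k), abs_nonneg (s - t)]
  refine ⟨fun t _ => le_ciInf fun k => (hE₀ k).trans (le_max_right _ _),
    fun s _ t _ hst => ciInf_mono (hb s) fun k =>
      max_le_max_right _ (mul_le_mul_of_nonneg_left hst (hR₀ k)),
    fun t ht => ?_, fun t _ => (LipschitzWith.ciInf hlip hb).continuous.continuousWithinAt⟩
  obtain ⟨k, hk⟩ := hE t ht
  exact (ciInf_le (hb t) k).trans_lt (max_lt (mul_lt_of_lt_one_left ht (hR₁ k)) hk)

noncomputable def wordWeight (n : ℕ) : ℝ := 2 - 2⁻¹ ^ n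

theorem wordWeight_le_two (n : ℕ) : wordWeight n ≤ 2 := by
  have : (0 : ℝ) ≤ 2⁻¹ ^ n := by positivity
  unfold wordWeight; linarith

theorem wordWeight_le_mul_succ {j J : ℕ} (h : j < J) :
    wordWeight j ≤ (1 - 2⁻¹ ^ (J + 1)) * wordWeight (j + 1) := by
  have hJ : (2 : ℝ)⁻¹ ^ (J + 1) ≤ 2⁻¹ ^ (j + 2) :=
    pow_le_pow_of_le_one (by norm_num) (by norm_num) (by omega)
  have h0 : (0 : ℝ) ≤ 2⁻¹ ^ (J + 1) := by positivity
  have h1 : (0 : ℝ) ≤ 2⁻¹ ^ j := by positivity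
  simp only [wordWeight, pow_succ] at hJ h0 ⊢
  nlinarith [mul_nonneg h0 h1]

section WordDist

variable {X I : Type*} [PseudoMetricSpace X] (f : I → X → X)

theorem min_dist_one_triangle (x y z : X) :
    min (dist x z) 1 ≤ min (dist x y) 1 + min (dist y z) 1 := by
  simp only [min_def]
  split_ifs <;> linarith [dist_triangle x y z, dist_nonneg (x := x) (y := y),
    dist_nonneg (x := y) (y := z)]

noncomputable def wordDist (x y : X) : ℝ :=
  ⨆ w : List I, wordWeight w.length * min (dist (WordMap f w x) (WordMap f w y)) 1

theorem le_wordDist (w : List I) (x y : X) :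
    wordWeight w.length * min (dist (WordMap f w x) (WordMap f w y)) 1 ≤ wordDist f x y := by
  refine le_ciSup (f := fun w : List I =>
    wordWeight w.length * min (dist (WordMap f w x) (WordMap f w y)) 1) ⟨2, ?_⟩ w
  rintro _ ⟨v, rfl⟩
  calc wordWeight v.length * min (dist (WordMap f v x) (WordMap f v y)) 1 ≤ 2 * 1 :=
        mul_le_mul (wordWeight_le_two _) (min_le_right _ _) (le_min dist_nonneg zero_le_one)
          zero_le_two
    _ = 2 := mul_one 2

theorem min_dist_le_wordDist (x y : X) : min (dist x y) 1 ≤ wordDist f x y := by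
  convert le_wordDist f [] x y using 1
  norm_num [wordWeight, WordMap]

theorem wordDist_nonneg (x y : X) : 0 ≤ wordDist f x y :=
  (le_min dist_nonneg zero_le_one).trans (min_dist_le_wordDist f x y)

theorem dist_eq_zero_of_wordDist_eq_zero {x y : X} (h : wordDist f x y = 0) : dist x y = 0 := by
  have := min_dist_le_wordDist f x y
  rw [h, min_le_iff] at this
  exact le_antisymm (this.resolve_right (by norm_num)) dist_nonneg

theorem wordDist_self (x : X) : wordDist f x x = 0 := by
  simp [wordDist]

theorem wordDist_comm (x y : X) : wordDist f x y = wordDist f y x := by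
  simp only [wordDist, dist_comm]

theorem wordDist_triangle (x y z : X) : wordDist f x z ≤ wordDist f x y + wordDist f y z := by
  refine ciSup_le fun w => ?_
  have hθ : 0 ≤ wordWeight w.length := by
    have : (2 : ℝ)⁻¹ ^ w.length ≤ 1 := pow_le_one₀ (by norm_num) (by norm_num)
    unfold wordWeight; linarith
  calc wordWeight w.length * min (dist (WordMap f w x) (WordMap f w z)) 1
      ≤ wordWeight w.length * min (dist (WordMap f w x) (WordMap f w y)) 1 +
          wordWeight w.length * min (dist (WordMap f w y) (WordMap f w z)) 1 := by
        rw [← mul_add]; exact mul_le_mul_of_nonneg_left (min_dist_one_triangle _ _ _) hθ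
    _ ≤ wordDist f x y + wordDist f y z := add_le_add (le_wordDist f w x y) (le_wordDist f w y z)

theorem wordDist_apply_le_max {x y : X} {J : ℕ} {ε : ℝ}
    (h : ∀ w : List I, J ≤ w.length → dist (WordMap f w x) (WordMap f w y) ≤ ε) (i : I) :
    wordDist f (f i x) (f i y) ≤ max ((1 - 2⁻¹ ^ (J + 1)) * wordDist f x y) (2 * ε) := by
  refine ciSup_le fun w => ?_
  have hw : ∀ z, WordMap f w (f i z) = WordMap f (w ++ [i]) z := fun z => by
    rw [wordMap_append]; rfl
  have hlen : (w ++ [i]).length = w.length + 1 := List.length_append ..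
  set m := min (dist (WordMap f (w ++ [i]) x) (WordMap f (w ++ [i]) y)) 1
  have hm : 0 ≤ m := le_min dist_nonneg zero_le_one
  simp only [hw]
  rcases lt_or_ge w.length J with hJ | hJ
  · have hR : 0 ≤ 1 - (2 : ℝ)⁻¹ ^ (J + 1) :=
      sub_nonneg.2 (pow_le_one₀ (by norm_num) (by norm_num))
    refine le_max_of_le_left ?_
    calc wordWeight w.length * m ≤ (1 - 2⁻¹ ^ (J + 1)) * wordWeight (w.length + 1) * m :=
          mul_le_mul_of_nonneg_right (wordWeight_le_mul_succ hJ) hm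
      _ = (1 - 2⁻¹ ^ (J + 1)) * (wordWeight (w ++ [i]).length * m) := by rw [hlen]; ring
      _ ≤ (1 - 2⁻¹ ^ (J + 1)) * wordDist f x y :=
          mul_le_mul_of_nonneg_left (le_wordDist f _ x y) hR
  · refine le_max_of_le_right ?_
    have hmε : m ≤ ε := (min_le_left _ _).trans (h _ (by omega))
    calc wordWeight w.length * m ≤ 2 * m := mul_le_mul_of_nonneg_right (wordWeight_le_two _) hm
      _ ≤ 2 * ε := by linarith

theorem exists_isComparisonFn_wordDist_le {S : Set X}
    (hS : ∀ ε > 0, ∃ n, ∀ w : List I, n ≤ w.length → ∀ x ∈ S, ∀ y ∈ S,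
      dist (WordMap f w x) (WordMap f w y) ≤ ε) :
    ∃ φ, IsComparisonFn φ ∧
      ∀ i, ∀ x ∈ S, ∀ y ∈ S, wordDist f (f i x) (f i y) ≤ φ (wordDist f x y) := by
  choose n hn using fun k : ℕ => hS (1 / (k + 1)) Nat.one_div_pos_of_nat
  refine ⟨_, isComparisonFn_iInf_max (R := fun k => 1 - 2⁻¹ ^ (n k + 1))
    (E := fun k => 2 * (1 / (k + 1))) (fun k => sub_nonneg.2 (pow_le_one₀ (by norm_num)
      (by norm_num))) (fun k => sub_lt_self _ (by positivity)) (fun k => by positivity) ?_,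
    fun i x hx y hy => le_ciInf fun k =>
      wordDist_apply_le_max f (fun w hw => hn k w hw x hx y hy) i⟩
  intro t ht
  obtain ⟨k, hk⟩ := exists_nat_one_div_lt (half_pos ht)
  exact ⟨k, by linarith⟩

end WordDist

theorem metric_on_attractor_general {X I : Type*} [Finite I]
    (f : I → X → X) (hF : HasAttractor f) :
    ∃ (d : X → X → ℝ) (φ : ℝ → ℝ),
      IsComparisonFn φ ∧
      (∀ x ∈ AttractorSet f, d x x = 0) ∧
      (∀ x ∈ AttractorSet f, ∀ y ∈ AttractorSet f, d x y = 0 → x = y) ∧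
      (∀ x ∈ AttractorSet f, ∀ y ∈ AttractorSet f, d x y = d y x) ∧
      (∀ x ∈ AttractorSet f, ∀ y ∈ AttractorSet f, ∀ z ∈ AttractorSet f,
        d x z ≤ d x y + d y z) ∧
      (∀ x ∈ AttractorSet f, ∀ y ∈ AttractorSet f, 0 ≤ d x y) ∧
      (∀ i : I, Set.MapsTo (f i) (AttractorSet f) (AttractorSet f)) ∧
      (∀ i : I, ∀ x ∈ AttractorSet f, ∀ y ∈ AttractorSet f,
        d (f i x) (f i y) ≤ φ (d x y)) := by
  obtain ⟨d, hd⟩ := exists_pseudoMetricSpace_uniformity_hasBasis cylinderRel_antitone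
    mem_cylinderRel_self (fun _ _ _ => mem_cylinderRel_symm) hF.exists_cylinderRel_comp_subset
  let := d
  have hsep : ∀ x y : X, dist x y = 0 → x = y := fun x y hxy =>
    hF.eq_of_forall_mem_cylinderRel fun n => by
      obtain ⟨ε, hε, hsub⟩ :=
        Metric.uniformity_basis_dist.mem_iff.1 (hd.mem_of_mem (i := n) trivial)
      exact hsub (show dist x y < ε by rwa [hxy])
  have hdecay : ∀ ε > 0, ∃ n, ∀ w : List I, n ≤ w.length → ∀ x ∈ AttractorSet f,
      ∀ y ∈ AttractorSet f, dist (WordMap f w x) (WordMap f w y) ≤ ε := fun ε hε => by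
    obtain ⟨n, -, hn⟩ := hd.mem_iff.1 (Metric.dist_mem_uniformity hε)
    exact ⟨n, fun w hw x hx y hy => (hn (mem_cylinderRel_wordMap hx hy hw)).le⟩
  obtain ⟨φ, hφ, hcontr⟩ := exists_isComparisonFn_wordDist_le f hdecay
  exact ⟨wordDist f, φ, hφ, fun x _ => wordDist_self f x,
    fun x _ y _ h => hsep x y (dist_eq_zero_of_wordDist_eq_zero f h),
    fun x _ y _ => wordDist_comm f x y, fun x _ y _ z _ => wordDist_triangle f x y z,
    fun x _ y _ => wordDist_nonneg f x y, mapsTo_attractorSet, hcontr⟩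

/-- **Theorem 3.4.** For a family having attractor `A`, there exist a metric `d` on `A`
and a comparison function `φ` making every `f_i` a `φ`-contraction on `A`
(in particular each `f_i` maps `A` into `A`). -/
theorem metric_on_attractor {X I : Type*} [Finite I] [Nonempty I]
    (f : I → X → X) (hF : HasAttractor f) :
    ∃ (d : X → X → ℝ) (φ : ℝ → ℝ),
      IsComparisonFn φ ∧
      (∀ x ∈ AttractorSet f, d x x = 0) ∧
      (∀ x ∈ AttractorSet f, ∀ y ∈ AttractorSet f, d x y = 0 → x = y) ∧
      (∀ x ∈ AttractorSet f, ∀ y ∈ AttractorSet f, d x y = d y x) ∧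
      (∀ x ∈ AttractorSet f, ∀ y ∈ AttractorSet f, ∀ z ∈ AttractorSet f,
        d x z ≤ d x y + d y z) ∧
      (∀ x ∈ AttractorSet f, ∀ y ∈ AttractorSet f, 0 ≤ d x y) ∧
      (∀ i : I, Set.MapsTo (f i) (AttractorSet f) (AttractorSet f)) ∧
      (∀ i : I, ∀ x ∈ AttractorSet f, ∀ y ∈ AttractorSet f,
        d (f i x) (f i y) ≤ φ (d x y)) :=
  metric_on_attractor_general f hF
end

section
/- Let X be a set, I a nonempty finite set, and (f_i)_{i∈I} a family of functions f_i : X → X having attractor A. Then f_i(X̃_α) ⊆ X̃_{iα} for every i ∈ I and every finite word α over I, where iα denotes the finite word obtained by prepending the letter i to α and X̃_β = X_β ∪ Y_β. -/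
/-!
The map `f i` carries `X_w` onto `X_{iw}`. For a point `a_β` of `Y_w`, the image `f i (a_β)` lies in
every `X_{[iβ]_n}`, so by uniqueness in (a) it is `a_{iβ}`; and `f i` carries a point of
`X_w ∩ X_{[β]_n}` into `X_{iw} ∩ X_{[iβ]_{n+1}}`, so `a_{iβ} ∈ Y_{iw}`.
-/

open Filter Topology Set

/-- Given a selection `a` of the points `a_β`,
`Y_w = {a_β : β ∈ Λ(I), X_w ∩ X_{[β]ₙ} ≠ ∅ for every n}`. -/
def YSet {X I : Type*} (f : I → X → X) (a : (ℕ → I) → X) (w : List I) : Set X :=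
  {y | ∃ β : ℕ → I, y = a β ∧ ∀ n : ℕ, (WordSet f w ∩ WordSet f (Pref β n)).Nonempty}

/-- `X̃_w = X_w ∪ Y_w`. -/
def XtSet {X I : Type*} (f : I → X → X) (a : (ℕ → I) → X) (w : List I) : Set X :=
  WordSet f w ∪ YSet f a w

section

variable {X I : Type*} (f : I → X → X)

def seqCons (i : I) (β : ℕ → I) : ℕ → I
  | 0 => i
  | n + 1 => β n

theorem wordSet_pref_zero (α : ℕ → I) : WordSet f (Pref α 0) = univ :=
  range_id

theorem wordSet_cons (i : I) (w : List I) : WordSet f (i :: w) = f i '' WordSet f w :=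
  range_comp (f i) (WordMap f w)

theorem pref_cons_succ (i : I) (β : ℕ → I) (n : ℕ) :
    Pref (seqCons i β) (n + 1) = i :: Pref β n :=
  List.ofFn_succ

theorem image_wordSet_subset (i : I) (w : List I) : f i '' WordSet f w ⊆ WordSet f (i :: w) :=
  (wordSet_cons f i w).ge

theorem mem_wordSet_pref_cons {i : I} {β : ℕ → I} {x : X}
    (hx : ∀ n, x ∈ WordSet f (Pref β n)) (n : ℕ) :
    f i x ∈ WordSet f (Pref (seqCons i β) n) := by
  cases n with
  | zero => simp only [wordSet_pref_zero, mem_univ]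
  | succ n =>
    rw [pref_cons_succ, wordSet_cons]
    exact mem_image_of_mem (f i) (hx n)

theorem HasAttractor.apply_eq_seqCons {f : I → X → X} (hF : HasAttractor f) {a : (ℕ → I) → X}
    (ha : ∀ (α : ℕ → I) (n : ℕ), a α ∈ WordSet f (Pref α n)) (i : I) (β : ℕ → I) :
    f i (a β) = a (seqCons i β) :=
  (hF.1 (seqCons i β)).unique (mem_wordSet_pref_cons f (ha β)) (ha _)

theorem image_YSet_subset {f : I → X → X} (hF : HasAttractor f) {a : (ℕ → I) → X}
    (ha : ∀ (α : ℕ → I) (n : ℕ), a α ∈ WordSet f (Pref α n)) (i : I) (w : List I) :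
    f i '' YSet f a w ⊆ YSet f a (i :: w) := by
  rintro _ ⟨_, ⟨β, rfl, hβ⟩, rfl⟩
  refine ⟨seqCons i β, hF.apply_eq_seqCons ha i β, fun n => ?_⟩
  obtain ⟨z, hzw, -⟩ := hβ 0
  cases n with
  | zero =>
    rw [wordSet_pref_zero, inter_univ]
    exact ⟨f i z, image_wordSet_subset f i w (mem_image_of_mem (f i) hzw)⟩
  | succ n =>
    rw [pref_cons_succ, wordSet_cons, wordSet_cons]
    exact ((hβ n).image (f i)).mono (image_inter_subset _ _ _)

end

theorem image_XtSet_subset_general {X I : Type*}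
    (f : I → X → X) (hF : HasAttractor f)
    (a : (ℕ → I) → X) (ha : ∀ (α : ℕ → I) (n : ℕ), a α ∈ WordSet f (Pref α n)) :
    ∀ (i : I) (w : List I), f i '' XtSet f a w ⊆ XtSet f a (i :: w) := by
  intro i w
  rw [XtSet, image_union]
  exact union_subset_union (image_wordSet_subset f i w) (image_YSet_subset hF ha i w)

/-- **Proposition 3.7 e).** `f_i(X̃_α) ⊆ X̃_{iα}` for every `i ∈ I` and every
finite word `α`. -/
theorem image_XtSet_subset {X I : Type*} [Finite I] [Nonempty I]
    (f : I → X → X) (hF : HasAttractor f)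
    (a : (ℕ → I) → X) (ha : ∀ (α : ℕ → I) (n : ℕ), a α ∈ WordSet f (Pref α n)) :
    ∀ (i : I) (w : List I), f i '' XtSet f a w ⊆ XtSet f a (i :: w) :=
  image_XtSet_subset_general f hF a ha
end

section
/- Let X be a set and f : X → X a function such that ⋂_{n∈ℕ} f^[n](X) is a singleton. Then there exist a complete and bounded metric d on X and a comparison function φ : [0,∞) → [0,∞) such that d(f(x), f(y)) ≤ φ(d(x,y)) for every x,y ∈ X. -/
open Filter Topology Set

/-- **Proposition 4.2 (converse of Browder's theorem).** If `⋂ₙ f^[n](X)` is a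
singleton, then there exist a complete and bounded metric `d` on `X` and a comparison
function `φ` such that `f` is a `φ`-contraction with respect to `d`. -/
theorem converse_browder {X : Type*} (f : X → X)
    (h : ∃ a : X, (⋂ n : ℕ, Set.range f^[n]) = {a}) :
    ∃ (m : MetricSpace X) (φ : ℝ → ℝ),
      IsComparisonFn φ ∧
      @CompleteSpace X m.toUniformSpace ∧
      (∃ C : ℝ, ∀ x y : X, m.dist x y ≤ C) ∧
      (∀ x y : X, m.dist (f x) (f y) ≤ φ (m.dist x y)) := by
  classical
  obtain ⟨a, hA⟩ := h
  -- ranges are antitone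
  have hanti : ∀ m n : ℕ, m ≤ n → Set.range f^[n] ⊆ Set.range f^[m] := by
    intro m n hmn
    obtain ⟨k, rfl⟩ := Nat.exists_eq_add_of_le hmn
    rintro x ⟨y, rfl⟩
    exact ⟨f^[k] y, (Function.iterate_add_apply f m k y).symm⟩
  -- the rank-based weight
  set e : X → ℝ := fun x =>
    if hx : ∀ n : ℕ, x ∈ Set.range f^[n] then 0
    else (1/2 : ℝ) ^ (Nat.find (not_forall.mp hx)) with he
  have he_nonneg : ∀ x, 0 ≤ e x := by
    intro x; rw [he]; dsimp only
    split
    · rfl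
    · positivity
  have he_le_one : ∀ x, e x ≤ 1 := by
    intro x; rw [he]; dsimp only
    split
    · norm_num
    · exact pow_le_one₀ (by norm_num) (by norm_num)
  have he_pos : ∀ x, ¬ (∀ n : ℕ, x ∈ Set.range f^[n]) → 0 < e x := by
    intro x hx; rw [he]; dsimp only
    rw [dif_neg hx]; positivity
  -- membership in all ranges means x = a
  have hmem_a : ∀ x : X, (∀ n : ℕ, x ∈ Set.range f^[n]) ↔ x = a := by
    intro x
    constructor
    · intro hx
      have : x ∈ ⋂ n : ℕ, Set.range f^[n] := Set.mem_iInter.mpr hx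
      rwa [hA, Set.mem_singleton_iff] at this
    · intro hxa n
      have ha : a ∈ ⋂ k : ℕ, Set.range f^[k] := by rw [hA]; rfl
      rw [hxa]
      exact Set.mem_iInter.mp ha n
  -- f raises rank: e (f x) ≤ e x / 2
  have hstep : ∀ x, e (f x) ≤ e x / 2 := by
    intro x
    by_cases hx : ∀ n : ℕ, x ∈ Set.range f^[n]
    · have hfx : ∀ n : ℕ, f x ∈ Set.range f^[n] := by
        intro n
        obtain ⟨y, hy⟩ := hx n
        exact ⟨f y, (Function.iterate_succ_apply f n y).symm.trans
          ((Function.iterate_succ_apply' f n y).trans (congrArg f hy))⟩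
      rw [he]; dsimp only
      rw [dif_pos hx, dif_pos hfx]; norm_num
    · -- x ∈ range f^[m] for m < N, so f x ∈ range f^[m] for m ≤ N
      set N := Nat.find (not_forall.mp hx) with hN
      have hxmem : ∀ m, m < N → x ∈ Set.range f^[m] := by
        intro m hm
        have := Nat.find_min (not_forall.mp hx) hm
        simpa using this
      have hfxmem : ∀ m, m ≤ N → f x ∈ Set.range f^[m] := by
        intro m hm
        rcases Nat.eq_zero_or_pos m with rfl | hm0
        · exact ⟨f x, rfl⟩
        · obtain ⟨k, rfl⟩ := Nat.exists_eq_succ_of_ne_zero hm0.ne'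
          obtain ⟨y, hy⟩ := hxmem k (by omega)
          exact ⟨y, (Function.iterate_succ_apply' f k y).trans (congrArg f hy)⟩
      by_cases hfx : ∀ n : ℕ, f x ∈ Set.range f^[n]
      · rw [he]; dsimp only
        rw [dif_pos hfx]
        have := he_pos x hx
        linarith [he_nonneg x, he_pos x hx]
      · have hN' : N + 1 ≤ Nat.find (not_forall.mp hfx) := by
          rw [Nat.add_one_le_iff, ← not_le]
          intro hle
          exact (Nat.find_spec (not_forall.mp hfx)) (hfxmem _ hle)
        rw [he]; dsimp only
        rw [dif_neg hx, dif_neg hfx, ← hN]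
        calc (1/2 : ℝ) ^ (Nat.find (not_forall.mp hfx))
            ≤ (1/2 : ℝ) ^ (N + 1) := by
              apply pow_le_pow_of_le_one (by norm_num) (by norm_num) hN'
          _ = (1/2 : ℝ) ^ N / 2 := by ring
  -- the distance
  set d : X → X → ℝ := fun x y => if x = y then 0 else max (e x) (e y) with hd
  have hd_nonneg : ∀ x y, 0 ≤ d x y := by
    intro x y; rw [hd]; dsimp only; split
    · rfl
    · exact le_max_of_le_left (he_nonneg x)
  have hd_self : ∀ x, d x x = 0 := fun x => if_pos rfl
  have hd_comm : ∀ x y, d x y = d y x := by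
    intro x y; rw [hd]; dsimp only
    by_cases hxy : x = y
    · subst hxy; rfl
    · rw [if_neg hxy, if_neg (Ne.symm hxy), max_comm]
  have hd_triangle : ∀ x y z, d x z ≤ d x y + d y z := by
    intro x y z
    rw [hd]; dsimp only
    by_cases hxz : x = z
    · rw [if_pos hxz]
      have := hd_nonneg x y; have := hd_nonneg y z
      rw [hd] at *; dsimp only at *; positivity
    · rw [if_neg hxz]
      by_cases hxy : x = y
      · subst hxy
        rw [if_pos rfl, if_neg hxz]
        simp
      · by_cases hyz : y = z
        · subst hyz
          rw [if_neg hxz, if_pos rfl]; simp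
        · rw [if_neg hxy, if_neg hyz]
          have h1 : e x ≤ max (e x) (e y) + max (e y) (e z) :=
            le_add_of_le_of_nonneg (le_max_left _ _)
              (le_max_of_le_left (he_nonneg y))
          have h2 : e z ≤ max (e x) (e y) + max (e y) (e z) :=
            le_add_of_nonneg_of_le (le_max_of_le_left (he_nonneg x))
              (le_max_right _ _)
          exact max_le h1 h2
  have hd_eq : ∀ x y, d x y = 0 → x = y := by
    intro x y hxy
    by_contra hne
    rw [hd] at hxy; dsimp only at hxy
    rw [if_neg hne] at hxy
    have : ¬(∀ n : ℕ, x ∈ Set.range f^[n]) ∨ ¬(∀ n : ℕ, y ∈ Set.range f^[n]) := by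
      by_contra hc
      push_neg at hc
      exact hne (((hmem_a x).mp hc.1).trans ((hmem_a y).mp hc.2).symm)
    rcases this with hx | hy
    · have h1 := le_max_left (e x) (e y)
      rw [hxy] at h1
      linarith [he_pos x hx]
    · have h1 := le_max_right (e x) (e y)
      rw [hxy] at h1
      linarith [he_pos y hy]
  letI m : MetricSpace X :=
    { dist := d
      dist_self := hd_self
      dist_comm := hd_comm
      dist_triangle := hd_triangle
      eq_of_dist_eq_zero := fun {x y} => hd_eq x y }
  have hdist : ∀ x y : X, m.dist x y = d x y := fun _ _ => rfl
  refine ⟨m, fun t => t / 2, ⟨?_, ?_, ?_, ?_⟩, ?_, ⟨1, ?_⟩, ?_⟩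
  · intro t ht; linarith
  · intro s _ t _ hst; linarith
  · intro t ht; linarith
  · intro t _
    exact (continuous_id.div_const 2).continuousAt.continuousWithinAt
  · -- completeness
    apply Metric.complete_of_cauchySeq_tendsto
    intro u hu
    by_cases hev : ∃ N : ℕ, ∀ n, N ≤ n → u n = u N
    · obtain ⟨N, hN⟩ := hev
      refine ⟨u N, tendsto_atTop_of_eventually_const (i₀ := N) hN⟩
    · push_neg at hev
      refine ⟨a, Metric.tendsto_atTop.mpr ?_⟩
      intro ε hε
      obtain ⟨N, hN⟩ := Metric.cauchySeq_iff.mp hu ε hε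
      refine ⟨N, fun n hn => ?_⟩
      -- find m ≥ N with u m ≠ u n
      obtain ⟨k, hk, hkne⟩ := hev n
      have hen : e (u n) < ε := by
        have hdk : m.dist (u k) (u n) < ε := hN k (hn.trans hk) n hn
        rw [hdist, hd] at hdk; dsimp only at hdk
        rw [if_neg hkne] at hdk
        exact lt_of_le_of_lt (le_max_right _ _) hdk
      have hea : e a = 0 := by
        rw [he]; dsimp only
        rw [dif_pos ((hmem_a a).mpr rfl)]
      by_cases hna : u n = a
      · rw [hna]; simpa [hd_self] using hε
      · have : m.dist (u n) a = e (u n) := by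
          rw [hdist, hd]; dsimp only
          rw [if_neg hna, hea, max_eq_left (he_nonneg _)]
        rw [this]; exact hen
  · -- boundedness
    intro x y
    rw [hdist, hd]; dsimp only
    split
    · norm_num
    · exact max_le (he_le_one x) (he_le_one y)
  · -- contraction
    intro x y
    rw [hdist, hdist, hd]; dsimp only
    by_cases hfxy : f x = f y
    · rw [if_pos hfxy]
      split
      · norm_num
      · have : (0:ℝ) ≤ max (e x) (e y) := le_max_of_le_left (he_nonneg x)
        linarith
    · have hxy : x ≠ y := fun hc => hfxy (hc ▸ rfl)
      rw [if_neg hfxy, if_neg hxy]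
      calc max (e (f x)) (e (f y)) ≤ max (e x / 2) (e y / 2) :=
            max_le_max (hstep x) (hstep y)
        _ = max (e x) (e y) / 2 := by rw [max_div_div_right (by norm_num : (0:ℝ) ≤ 2)]
end

section
/- Let X be a set, α ∈ (0,1), and f : X → X a function such that ⋂_{n∈ℕ} f^[n](X) is a singleton. Then there exists a complete and bounded metric d on X such that d(f(x), f(y)) ≤ α·d(x,y) for every x,y ∈ X. -/
open Filter Topology Set

/-- **Proposition 4.3 (a particular case of Bessaga's theorem).** If `⋂ₙ f^[n](X)` is a
singleton and `α ∈ (0,1)`, then there exists a complete and bounded metric `d` on `X`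
such that `d(f(x), f(y)) ≤ α · d(x,y)` for all `x, y`. -/
theorem converse_contraction_principle {X : Type*} (f : X → X)
    (α : ℝ) (hα : α ∈ Set.Ioo (0 : ℝ) 1)
    (h : ∃ a : X, (⋂ n : ℕ, Set.range f^[n]) = {a}) :
    ∃ m : MetricSpace X,
      @CompleteSpace X m.toUniformSpace ∧
      (∃ C : ℝ, ∀ x y : X, m.dist x y ≤ C) ∧
      (∀ x y : X, m.dist (f x) (f y) ≤ α * m.dist x y) := by
  classical
  obtain ⟨a, ha⟩ := h
  obtain ⟨hα0, hα1⟩ := hα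
  -- membership characterization
  have hmem : ∀ x : X, (∀ n : ℕ, x ∈ Set.range f^[n]) → x = a := by
    intro x hx
    have : x ∈ ⋂ n : ℕ, Set.range f^[n] := Set.mem_iInter.2 hx
    rwa [ha, Set.mem_singleton_iff] at this
  have hamem : ∀ n : ℕ, a ∈ Set.range f^[n] := by
    intro n
    have : a ∈ ⋂ n : ℕ, Set.range f^[n] := by rw [ha]; exact rfl
    exact Set.mem_iInter.1 this n
  have hfa : f a = a := by
    apply hmem
    intro n
    obtain ⟨z, hz⟩ := hamem n
    exact ⟨f z, by rw [← Function.iterate_succ_apply, Function.iterate_succ_apply', hz]⟩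
  -- the set of ranks
  set S : X → Set ℕ := fun x => {n : ℕ | x ∈ Set.range f^[n]} with hS
  have hS0 : ∀ x, 0 ∈ S x := fun x => ⟨x, rfl⟩
  have hSne : ∀ x, (S x).Nonempty := fun x => ⟨0, hS0 x⟩
  have hSdown : ∀ x, ∀ {j k : ℕ}, j ≤ k → k ∈ S x → j ∈ S x := by
    intro x j k hjk hk
    obtain ⟨z, hz⟩ := hk
    refine ⟨f^[k - j] z, ?_⟩
    rw [← Function.iterate_add_apply]
    rwa [Nat.add_sub_cancel' hjk]
  have hSbdd : ∀ x, x ≠ a → BddAbove (S x) := by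
    intro x hx
    by_contra hb
    apply hx
    apply hmem
    intro n
    obtain ⟨k, hk, hnk⟩ := not_bddAbove_iff.1 hb n
    exact hSdown x (le_of_lt hnk) hk
  -- rank and weight
  set N : X → ℕ := fun x => sSup (S x) with hN
  set w : X → ℝ := fun x => if x = a then 0 else α ^ (N x) with hw
  have hw_nonneg : ∀ x, 0 ≤ w x := by
    intro x
    simp only [hw]
    split
    · exact le_refl 0
    · positivity
  have hw_le_one : ∀ x, w x ≤ 1 := by
    intro x
    simp only [hw]
    split
    · exact zero_le_one
    · exact pow_le_one₀ (le_of_lt hα0) (le_of_lt hα1)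
  have hw_eq_zero : ∀ x, w x = 0 → x = a := by
    intro x hx
    by_contra hxa
    simp only [hw, if_neg hxa] at hx
    exact absurd hx (ne_of_gt (pow_pos hα0 _))
  have hwa : w a = 0 := by simp [hw]
  -- contraction step for w
  have hw_step : ∀ x, w (f x) ≤ α * w x := by
    intro x
    by_cases hx : x = a
    · subst hx
      rw [hfa, hwa, mul_zero]
    · by_cases hfx : f x = a
      · rw [hfx, hwa]
        have := hw_nonneg x
        positivity
      · simp only [hw, if_neg hx, if_neg hfx]
        rw [← pow_succ']
        have hNx : N x ∈ S x := Nat.sSup_mem (hSne x) (hSbdd x hx)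
        obtain ⟨z, hz⟩ := hNx
        have hmem1 : N x + 1 ∈ S (f x) := ⟨z, by rw [Function.iterate_succ_apply', hz]⟩
        have hle : N x + 1 ≤ N (f x) := le_csSup (hSbdd (f x) hfx) hmem1
        exact pow_le_pow_of_le_one (le_of_lt hα0) (le_of_lt hα1) hle
  -- the distance
  set d : X → X → ℝ := fun x y => if x = y then 0 else w x + w y with hd
  have hd_nonneg : ∀ x y, 0 ≤ d x y := by
    intro x y
    simp only [hd]
    split
    · exact le_refl 0
    · exact add_nonneg (hw_nonneg x) (hw_nonneg y)
  have hd_self : ∀ x, d x x = 0 := fun x => if_pos rfl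
  have hd_comm : ∀ x y, d x y = d y x := by
    intro x y
    simp only [hd]
    by_cases hxy : x = y
    · rw [if_pos hxy, if_pos hxy.symm]
    · rw [if_neg hxy, if_neg (Ne.symm hxy), add_comm]
  have hd_triangle : ∀ x y z, d x z ≤ d x y + d y z := by
    intro x y z
    by_cases hxz : x = z
    · rw [hxz, hd_self]
      exact add_nonneg (hd_nonneg _ _) (hd_nonneg _ _)
    · by_cases hxy : x = y
      · subst hxy
        rw [hd_self, zero_add]
      · by_cases hyz : y = z
        · subst hyz
          rw [hd_self, add_zero]
        · simp only [hd, if_neg hxz, if_neg hxy, if_neg hyz]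
          have := hw_nonneg y
          linarith
  have hd_eq : ∀ x y, d x y = 0 → x = y := by
    intro x y hxy
    by_contra hne
    simp only [hd, if_neg hne] at hxy
    have hx0 : w x = 0 := le_antisymm (by linarith [hw_nonneg y]) (hw_nonneg x)
    have hy0 : w y = 0 := le_antisymm (by linarith [hw_nonneg x]) (hw_nonneg y)
    exact hne ((hw_eq_zero x hx0).trans (hw_eq_zero y hy0).symm)
  set m : MetricSpace X :=
    { dist := d
      dist_self := hd_self
      dist_comm := hd_comm
      dist_triangle := hd_triangle
      eq_of_dist_eq_zero := hd_eq _ _ } with hm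
  refine ⟨m, ?_, ⟨2, ?_⟩, ?_⟩
  · -- completeness
    letI := m
    apply Metric.complete_of_cauchySeq_tendsto
    intro u hu
    by_cases hc : ∃ M : ℕ, ∀ n, M ≤ n → u n = u M
    · obtain ⟨M, hM⟩ := hc
      refine ⟨u M, ?_⟩
      rw [Metric.tendsto_atTop]
      intro ε hε
      exact ⟨M, fun n hn => by rw [hM n hn]; simpa [hm] using hε⟩
    · push_neg at hc
      refine ⟨a, ?_⟩
      rw [Metric.tendsto_atTop]
      intro ε hε
      obtain ⟨M, hM⟩ := Metric.cauchySeq_iff.1 hu ε hε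
      refine ⟨M, fun n hn => ?_⟩
      by_cases hna : u n = a
      · rw [hna]
        simpa [hm, hd_self] using hε
      · obtain ⟨k, hk, hku⟩ := hc n
        have hkey : d (u n) (u k) < ε := hM n hn k (le_trans hn hk)
        have : w (u n) + w (u k) < ε := by
          simp only [hd] at hkey
          rwa [if_neg (fun hh : u n = u k => hku hh.symm)] at hkey
        have hwn : w (u n) < ε := by linarith [hw_nonneg (u k)]
        show d (u n) a < ε
        simp only [hd]
        rw [if_neg hna, hwa, add_zero]
        exact hwn
  · -- boundedness
    intro x y
    show d x y ≤ 2
    simp only [hd]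
    split
    · norm_num
    · linarith [hw_le_one x, hw_le_one y]
  · -- contraction
    intro x y
    show d (f x) (f y) ≤ α * d x y
    by_cases hfxy : f x = f y
    · simp only [hd]
      rw [if_pos hfxy]
      have := hd_nonneg x y
      positivity
    · have hxy : x ≠ y := fun hh => hfxy (by rw [hh])
      simp only [hd, if_neg hfxy, if_neg hxy, mul_add]
      exact add_le_add (hw_step x) (hw_step y)
end
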